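/- Every decomposition of a CRN whose set of common complexes has at most one element (d ≤ 1) is incidence independent. -/
import Mathlib


open Finset

/-- The set of complexes of subnetwork `i` (complexes occurring in its reactions). -/
def cplxSet {C R : Type} (src tgt : R → C) {k : ℕ} (part : R → Fin k) (i : Fin k) : Set C :=
  {c | ∃ r, part r = i ∧ (src r = c ∨ tgt r = c)}

/-- The set of common complexes of the decomposition: complexes occurring in at least
two distinct subnetworks. -/
def commonSet {C R : Type} (src tgt : R → C) {k : ℕ} (part : R → Fin k) : Set C :=
  {c | ∃ i j : Fin k, i ≠ j ∧ c ∈ cplxSet src tgt part i ∧ c ∈ cplxSet src tgt part j}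

/-- Underlying (undirected) graph of the reaction network. -/
def parentGraph {C R : Type} (src tgt : R → C) : SimpleGraph C :=
  SimpleGraph.fromRel (fun a b => ∃ r, src r = a ∧ tgt r = b)

/-- Underlying graph of subnetwork `i`. -/
def subGraph {C R : Type} (src tgt : R → C) {k : ℕ} (part : R → Fin k) (i : Fin k) :
    SimpleGraph C :=
  SimpleGraph.fromRel (fun a b => ∃ r, part r = i ∧ src r = a ∧ tgt r = b)

/-- The incidence map `I_a : ℝ^ℛ → ℝ^𝒞`. -/
noncomputable def incid {C R : Type} [Fintype R] [DecidableEq C] (src tgt : R → C) :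
    (R → ℝ) →ₗ[ℝ] (C → ℝ) :=
  ∑ r : R, (LinearMap.toSpanSingleton ℝ (C → ℝ)
      (Pi.single (tgt r) 1 - Pi.single (src r) 1)).comp (LinearMap.proj r)

/-- The incidence map of subnetwork `i`. -/
noncomputable def incidSub {C R : Type} [Fintype R] [DecidableEq C] (src tgt : R → C)
    {k : ℕ} (part : R → Fin k) (i : Fin k) : (R → ℝ) →ₗ[ℝ] (C → ℝ) :=
  ∑ r ∈ Finset.univ.filter (fun r => part r = i),
    (LinearMap.toSpanSingleton ℝ (C → ℝ)
      (Pi.single (tgt r) 1 - Pi.single (src r) 1)).comp (LinearMap.proj r)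

/-- Incidence independence: the image of the incidence map of the parent network is
the (internal) direct sum of the images of the subnetworks' incidence maps. -/
def IncIndep {C R : Type} [Fintype R] [DecidableEq C] (src tgt : R → C)
    {k : ℕ} (part : R → Fin k) : Prop :=
  LinearMap.range (incid src tgt) = (⨆ i : Fin k, LinearMap.range (incidSub src tgt part i)) ∧
  ∀ f : Fin k → (C → ℝ), (∀ i, f i ∈ LinearMap.range (incidSub src tgt part i)) →
    (∑ i, f i) = 0 → ∀ i, f i = 0

/-- Number of linkage classes of subnetwork `i`: connected components of its underlying
graph that meet its complex set. -/
noncomputable def numLCsub {C R : Type} (src tgt : R → C) {k : ℕ} (part : R → Fin k)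
    (i : Fin k) : ℕ :=
  Nat.card {comp : (subGraph src tgt part i).ConnectedComponent //
    ∃ c ∈ cplxSet src tgt part i, (subGraph src tgt part i).connectedComponentMk c = comp}

section Aux

variable {C R : Type} [Fintype R] [DecidableEq C] (src tgt : R → C) {k : ℕ} (part : R → Fin k)

lemma incid_apply (x : R → ℝ) :
    incid src tgt x = ∑ r, x r • (Pi.single (tgt r) 1 - Pi.single (src r) 1) := by
  simp [incid, LinearMap.sum_apply, LinearMap.toSpanSingleton_apply]

lemma incidSub_apply (i : Fin k) (x : R → ℝ) :
    incidSub src tgt part i x = ∑ r ∈ Finset.univ.filter (fun r => part r = i),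
      x r • (Pi.single (tgt r) 1 - Pi.single (src r) 1) := by
  simp [incidSub, LinearMap.sum_apply, LinearMap.toSpanSingleton_apply]

lemma incidSub_support (i : Fin k) (x : R → ℝ) {c : C}
    (hc : c ∉ cplxSet src tgt part i) : incidSub src tgt part i x c = 0 := by
  rw [incidSub_apply]
  rw [Finset.sum_apply]
  refine Finset.sum_eq_zero fun r hr => ?_
  simp only [Finset.mem_filter] at hr
  have h1 : src r ≠ c := fun h => hc ⟨r, hr.2, Or.inl h⟩
  have h2 : tgt r ≠ c := fun h => hc ⟨r, hr.2, Or.inr h⟩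
  simp [Pi.single_eq_of_ne' h1, Pi.single_eq_of_ne' h2]

lemma incidSub_sum [Fintype C] (i : Fin k) (x : R → ℝ) :
    ∑ c, incidSub src tgt part i x c = 0 := by
  rw [incidSub_apply]
  simp only [Finset.sum_apply, Pi.smul_apply, Pi.sub_apply, smul_eq_mul]
  rw [Finset.sum_comm]
  refine Finset.sum_eq_zero fun r _ => ?_
  rw [← Finset.mul_sum]
  simp [Finset.sum_sub_distrib, Pi.single_apply]

end Aux

/-- every decomposition whose set of common complexes has at most one
element is incidence independent. -/
theorem stmt14 {C R : Type} [Fintype C] [Fintype R] [DecidableEq C]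
    (src tgt : R → C)
    (hloop : ∀ r, src r ≠ tgt r)
    (hiso : ∀ c : C, ∃ r, src r = c ∨ tgt r = c)
    {k : ℕ} (part : R → Fin k)
    (hd : Nat.card ↥(commonSet src tgt part) ≤ 1) :
    IncIndep src tgt part := by
  constructor
  · -- range equality
    apply le_antisymm
    · rintro _ ⟨x, rfl⟩
      have : incid src tgt x = ∑ i : Fin k, incidSub src tgt part i x := by
        rw [incid_apply]
        simp only [incidSub_apply]
        exact (Finset.sum_fiberwise Finset.univ part
          (fun r => x r • (Pi.single (tgt r) 1 - Pi.single (src r) 1))).symm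
      rw [this]
      exact Submodule.sum_mem _ fun i _ =>
        Submodule.mem_iSup_of_mem i ⟨x, rfl⟩
    · refine iSup_le fun i => ?_
      rintro _ ⟨x, rfl⟩
      refine ⟨fun r => if part r = i then x r else 0, ?_⟩
      rw [incid_apply, incidSub_apply]
      rw [← Finset.sum_filter_add_sum_filter_not Finset.univ (fun r => part r = i)]
      have h2 : ∑ r ∈ Finset.univ.filter (fun r => ¬ part r = i),
          (if part r = i then x r else 0) •
            ((Pi.single (tgt r) 1 - Pi.single (src r) 1 : C → ℝ)) = 0 := by
        refine Finset.sum_eq_zero fun r hr => ?_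
        simp only [Finset.mem_filter] at hr
        simp [if_neg hr.2]
      rw [h2, add_zero]
      refine Finset.sum_congr rfl fun r hr => ?_
      simp only [Finset.mem_filter] at hr
      rw [if_pos hr.2]
  · -- independence
    intro f hf hsum i
    have hss : (commonSet src tgt part).Subsingleton := by
      rw [← Set.subsingleton_coe]
      exact Finite.card_le_one_iff_subsingleton.mp hd
    -- f j vanishes outside cplxSet j
    have hA : ∀ j : Fin k, ∀ c : C, c ∉ cplxSet src tgt part j → f j c = 0 := by
      intro j c hc
      obtain ⟨x, hx⟩ := hf j
      rw [← hx]
      exact incidSub_support src tgt part j x hc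
    -- f j vanishes at non-common complexes
    have hC : ∀ c : C, c ∉ commonSet src tgt part → ∀ j : Fin k, f j c = 0 := by
      intro c hc j
      by_cases hcj : c ∈ cplxSet src tgt part j
      · have hz : ∀ l : Fin k, l ≠ j → f l c = 0 := by
          intro l hl
          refine hA l c fun hcl => hc ⟨l, j, hl, hcl, hcj⟩
        have := congrFun hsum c
        simp only [Finset.sum_apply, Pi.zero_apply] at this
        rw [Finset.sum_eq_single j (fun l _ hl => hz l hl) (by simp)] at this
        exact this
      · exact hA j c hcj
    -- column sums of f i vanish
    have hB : ∑ c, f i c = 0 := by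
      obtain ⟨x, hx⟩ := hf i
      rw [← hx]
      exact incidSub_sum src tgt part i x
    funext c
    by_cases hc : c ∈ commonSet src tgt part
    · have : ∀ c' : C, c' ≠ c → f i c' = 0 := by
        intro c' hc'
        by_cases hc'' : c' ∈ commonSet src tgt part
        · exact absurd (hss hc'' hc) hc'
        · exact hC c' hc'' i
      rw [Finset.sum_eq_single c (fun c' _ hc' => this c' hc') (by simp)] at hB
      exact hB
    · exact hC c hc i
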